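/- The pentagon identity for cluster mutation matrices: assume ε_{ij} = 1 for some i,j ∈ I. Let T⁽⁰⁾ → T⁽¹⁾ → ⋯ → T⁽⁵⁾ be the seeds obtained by mutating at i, j, i, j, i in turn. Then the composition C⁽¹⁾C⁽²⁾C⁽³⁾C⁽⁴⁾C⁽⁵⁾ : V_{T⁽⁵⁾} → V_{T⁽⁰⁾} of the five mutation linear maps with signs +, +, −, −, − equals the transposition isomorphism C_{(ij)} sending x'_i ↦ x_j, x'_j ↦ x_i, and x'_e ↦ x_e for e ∉ {i,j}. -/

import Mathlib

noncomputable section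

/-- The positive part `[a]₊ = max(a,0)` of a real number. -/
def plusPart (a : ℝ) : ℝ := max a 0

/-- Matrix mutation at `k`: `ε'_{ef} = −ε_{ef}` if `k ∈ {e,f}`, and otherwise
`ε'_{ef} = ε_{ef} + (|ε_{ek}|ε_{kf} + ε_{ek}|ε_{kf}|)/2`. -/
def mutMat {I : Type*} [DecidableEq I] (ε : I → I → ℝ) (k : I) : I → I → ℝ :=
  fun e f =>
    if e = k ∨ f = k then -ε e f
    else ε e f + (|ε e k| * ε k f + ε e k * |ε k f|) / 2

/-- The cluster mutation linear map `C_k^{(ϵ)}` from the mutated space (with basis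
`bNew`) to the original space (with basis `bOld` and exchange matrix `ε`), sending
`x'_k ↦ −x_k` and `x'_e ↦ x_e + [ϵ ε_{ek}]₊ x_k` for `e ≠ k`. -/
def mutMap {I : Type*} [Fintype I] [DecidableEq I]
    {M M' : Type*} [AddCommGroup M] [Module ℝ M] [AddCommGroup M'] [Module ℝ M']
    (bNew : Module.Basis I ℝ M') (bOld : Module.Basis I ℝ M)
    (ε : I → I → ℝ) (k : I) (ϵ : ℝ) : M' →ₗ[ℝ] M :=
  bNew.constr ℝ fun e =>
    if e = k then -(bOld k) else bOld e + plusPart (ϵ * ε e k) • bOld k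

/-! Compute the composite on the basis. On `x_i` and `x_j` only the entries at `(i,j)` and
`(j,i)` of the exchange matrices enter, and these merely alternate in sign. For `e ∉ {i,j}` the
composite sends `x_e` to `x_e` plus multiples of `x_i` and `x_j` whose coefficients are
piecewise-linear in `a = ε_{ei}` and `u = ε_{ej} + [a]₊`; they vanish by the two tropical
identities `plusPart_pentagon_fst` and `plusPart_pentagon_snd`. -/

theorem plusPart_of_nonneg {a : ℝ} (h : 0 ≤ a) : plusPart a = a := max_eq_left h

theorem plusPart_of_nonpos {a : ℝ} (h : a ≤ 0) : plusPart a = 0 := max_eq_right h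

theorem plusPart_one : plusPart 1 = 1 := plusPart_of_nonneg zero_le_one

theorem plusPart_neg_one : plusPart (-1) = 0 := plusPart_of_nonpos (by norm_num)

theorem half_abs_mul_add_mul_abs {x t : ℝ} (ht : 0 ≤ t) :
    (|x| * t + x * |t|) / 2 = plusPart x * t := by
  rw [abs_of_nonneg ht]
  rcases le_total x 0 with hx | hx
  · rw [abs_of_nonpos hx, plusPart_of_nonpos hx]; ring
  · rw [abs_of_nonneg hx, plusPart_of_nonneg hx]; ring

theorem plusPart_pentagon_fst (a u : ℝ) :
    plusPart (a - plusPart u) + plusPart (u - plusPart (plusPart u - a)) = plusPart a := by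
  simp only [plusPart, max_def]
  split_ifs <;> linarith

theorem plusPart_pentagon_snd (a u : ℝ) :
    plusPart (plusPart u - a - plusPart (plusPart (plusPart u - a) - u)) +
      plusPart (u - plusPart (plusPart u - a)) = plusPart u := by
  simp only [plusPart, max_def]
  split_ifs <;> linarith

section Mutation

variable {I : Type*} [DecidableEq I]

theorem mutMat_apply_self_left (η : I → I → ℝ) (k f : I) : mutMat η k k f = -η k f := by
  simp [mutMat]

theorem mutMat_apply_self_right (η : I → I → ℝ) (e k : I) : mutMat η k e k = -η e k := by
  simp [mutMat]

theorem mutMat_apply_of_nonneg {η : I → I → ℝ} {k e f : I} (he : e ≠ k) (hf : f ≠ k)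
    (h : 0 ≤ η k f) : mutMat η k e f = η e f + plusPart (η e k) * η k f := by
  rw [mutMat, if_neg (not_or.2 ⟨he, hf⟩), half_abs_mul_add_mul_abs h]

variable [Fintype I] {M M' : Type*} [AddCommGroup M] [Module ℝ M] [AddCommGroup M']
  [Module ℝ M'] (bNew : Module.Basis I ℝ M') (bOld : Module.Basis I ℝ M)

theorem mutMap_basis_self (η : I → I → ℝ) (k : I) (ϵ : ℝ) :
    mutMap bNew bOld η k ϵ (bNew k) = -bOld k := by
  rw [mutMap, Module.Basis.constr_basis, if_pos rfl]

theorem mutMap_basis_of_ne (η : I → I → ℝ) {k e : I} (ϵ : ℝ) (h : e ≠ k) :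
    mutMap bNew bOld η k ϵ (bNew e) = bOld e + plusPart (ϵ * η e k) • bOld k := by
  rw [mutMap, Module.Basis.constr_basis, if_neg h]

end Mutation

section Pentagon

variable {I : Type*} [Fintype I] [DecidableEq I] {M : Type*} [AddCommGroup M] [Module ℝ M]
  (b : Module.Basis I ℝ M) {ε : I → I → ℝ} {i j : I}

def pentagonMap (ε : I → I → ℝ) (i j : I) : M →ₗ[ℝ] M :=
  (mutMap b b ε i 1).comp
    ((mutMap b b (mutMat ε i) j 1).comp
      ((mutMap b b (mutMat (mutMat ε i) j) i (-1)).comp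
        ((mutMap b b (mutMat (mutMat (mutMat ε i) j) i) j (-1)).comp
          (mutMap b b (mutMat (mutMat (mutMat (mutMat ε i) j) i) j) i (-1)))))

theorem pentagonMap_basis_left (hij : i ≠ j) (h1 : ε i j = 1) (h2 : ε j i = -1) :
    pentagonMap b ε i j (b i) = b j := by
  simp only [pentagonMap, LinearMap.comp_apply, map_neg, map_add, map_smul, mutMap_basis_self,
    mutMap_basis_of_ne b b _ _ hij, mutMap_basis_of_ne b b _ _ hij.symm, mutMat_apply_self_left,
    mutMat_apply_self_right, h1, h2, neg_neg, neg_one_mul, one_mul, plusPart_one, plusPart_neg_one]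
  module

theorem pentagonMap_basis_right (hij : i ≠ j) (h1 : ε i j = 1) (h2 : ε j i = -1) :
    pentagonMap b ε i j (b j) = b i := by
  simp only [pentagonMap, LinearMap.comp_apply, map_neg, map_add, map_smul, mutMap_basis_self,
    mutMap_basis_of_ne b b _ _ hij, mutMap_basis_of_ne b b _ _ hij.symm, mutMat_apply_self_left,
    mutMat_apply_self_right, h1, h2, neg_neg, neg_one_mul, one_mul, plusPart_one, plusPart_neg_one]
  module

theorem pentagonMap_basis_of_ne (hij : i ≠ j) (h1 : ε i j = 1) (h2 : ε j i = -1) {e : I}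
    (hei : e ≠ i) (hej : e ≠ j) : pentagonMap b ε i j (b e) = b e := by
  simp only [pentagonMap, LinearMap.comp_apply, map_neg, map_add, map_smul, mutMap_basis_self,
    mutMap_basis_of_ne b b _ _ hij, mutMap_basis_of_ne b b _ _ hij.symm,
    mutMap_basis_of_ne b b _ _ hei, mutMap_basis_of_ne b b _ _ hej]
  set a := ε e i
  set u := ε e j + plusPart a
  set η₁ := mutMat ε i with def₁
  set η₂ := mutMat η₁ j with def₂
  set η₃ := mutMat η₂ i with def₃
  set η₄ := mutMat η₃ j with def₄
  have hη₁ : η₁ j i = 1 := by rw [def₁, mutMat_apply_self_right, h2, neg_neg]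
  have hη₁' : η₁ i j = -1 := by rw [def₁, mutMat_apply_self_left, h1]
  have hη₂ : η₂ i j = 1 := by rw [def₂, mutMat_apply_self_right, hη₁', neg_neg]
  have hη₂' : η₂ j i = -1 := by rw [def₂, mutMat_apply_self_left, hη₁]
  have hη₃ : η₃ j i = 1 := by rw [def₃, mutMat_apply_self_right, hη₂', neg_neg]
  have hη₃' : η₃ i j = -1 := by rw [def₃, mutMat_apply_self_left, hη₂]
  have e1i : η₁ e i = -a := mutMat_apply_self_right ε e i
  have e1j : η₁ e j = u := by
    rw [def₁, mutMat_apply_of_nonneg hei hij.symm (h1 ▸ zero_le_one), h1, mul_one]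
  have e2j : η₂ e j = -u := by rw [def₂, mutMat_apply_self_right, e1j]
  have e2i : η₂ e i = -(a - plusPart u) := by
    rw [def₂, mutMat_apply_of_nonneg hej hij (hη₁ ▸ zero_le_one), hη₁, e1i, e1j]; ring
  have e3i : η₃ e i = a - plusPart u := by rw [def₃, mutMat_apply_self_right, e2i, neg_neg]
  have e3j : η₃ e j = -(u - plusPart (plusPart u - a)) := by
    rw [def₃, mutMat_apply_of_nonneg hei hij.symm (hη₂ ▸ zero_le_one), hη₂, e2i, e2j]; ring_nf
  have e4i : η₄ e i = -(plusPart u - a - plusPart (plusPart (plusPart u - a) - u)) := by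
    rw [def₄, mutMat_apply_of_nonneg hej hij (hη₃ ▸ zero_le_one), hη₃, e3i, e3j]; ring_nf
  simp only [h2, hη₁', hη₂', hη₃', e1j, e2i, e3j, e4i, neg_one_mul, one_mul, neg_neg,
    plusPart_one, plusPart_neg_one]
  match_scalars
  all_goals linarith [plusPart_pentagon_fst a u, plusPart_pentagon_snd a u]

theorem pentagonMap_eq_constr_swap (hij : i ≠ j) (h1 : ε i j = 1) (h2 : ε j i = -1) :
    pentagonMap b ε i j = b.constr ℝ (fun e => b (Equiv.swap i j e)) := by
  refine b.ext fun e => ?_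
  rw [Module.Basis.constr_basis]
  rcases eq_or_ne e i with rfl | hei
  · rw [Equiv.swap_apply_left, pentagonMap_basis_left b hij h1 h2]
  rcases eq_or_ne e j with rfl | hej
  · rw [Equiv.swap_apply_right, pentagonMap_basis_right b hij h1 h2]
  rw [Equiv.swap_apply_of_ne_of_ne hei hej, pentagonMap_basis_of_ne b hij h1 h2 hei hej]

end Pentagon

/-- The pentagon identity: if `ε_{ij} = 1`, the composition of the five mutation
linear maps (mutations at `i, j, i, j, i` with signs `+, +, −, −, −`) equals the
transposition isomorphism `C_{(ij)}` sending `x'_i ↦ x_j`, `x'_j ↦ x_i`, and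
`x'_e ↦ x_e` for `e ∉ {i,j}`. -/
theorem mutMap_pentagon_identity
    {I : Type*} [Fintype I] [DecidableEq I]
    {M : Type*} [AddCommGroup M] [Module ℝ M]
    (ε : I → I → ℝ) (hskew : ∀ e f, ε f e = -ε e f)
    (i j : I) (hij : i ≠ j) (h1 : ε i j = 1)
    (b : Module.Basis I ℝ M) :
    (mutMap b b ε i 1).comp
      ((mutMap b b (mutMat ε i) j 1).comp
        ((mutMap b b (mutMat (mutMat ε i) j) i (-1)).comp
          ((mutMap b b (mutMat (mutMat (mutMat ε i) j) i) j (-1)).comp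
            (mutMap b b (mutMat (mutMat (mutMat (mutMat ε i) j) i) j) i (-1))))) =
      b.constr ℝ (fun e => b (Equiv.swap i j e)) :=
  pentagonMap_eq_constr_swap b hij h1 (by rw [hskew, h1])
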